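/- arXiv:1009.3295 — 5 statements merged into one kernel-verified Lean document; each statement's English description precedes it below -/
import Mathlib

section
/- The ring H_ℤ with generators a_n, b_n (n ≥ 1) and defining relations a_n b_m = b_m a_n + b_{m-1} a_{n-1}, a_n a_m = a_m a_n, b_n b_m = b_m b_n (where a_0 = b_0 = 1) is free as an abelian group with basis given by the monomials b_{m_1}⋯b_{m_k} a_{n_1}⋯a_{n_r} with 1 ≤ m_1 ≤ ⋯ ≤ m_k and 1 ≤ n_1 ≤ ⋯ ≤ n_r. -/
/-!
Spanning: the span of the normal monomials is a left ideal. Indeed `b_m` times a normal monomial is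
a normal monomial after sorting, and `a_n (b_m w) = b_m (a_n w) + b_{m-1} (a_{n-1} w)` lets
induction on the number of `b`'s handle `a_n`.

Independence: `H_ℤ` acts on the free abelian group `V` on pairs of multisets `(s, t)`, read as
`b_s a_t`. Here `b_m` adds `m` to `s`, and `a_n` is computed by pushing it through the `b`'s of `s`
with the defining relation. The only relation that needs work is `a_n a_m = a_m a_n`, which follows
by induction on `s`. Applied to the vector `(∅, ∅)`, distinct normal monomials give distinct basis
vectors of `V`.
-/

/-- Generators: `A n` represents `a (n+1)`, `B n` represents `b (n+1)`. -/
inductive HeisGen : Type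
  | A : ℕ → HeisGen
  | B : ℕ → HeisGen

noncomputable def aF : ℕ → FreeAlgebra ℤ HeisGen
  | 0 => 1
  | n + 1 => FreeAlgebra.ι ℤ (HeisGen.A n)

noncomputable def bF : ℕ → FreeAlgebra ℤ HeisGen
  | 0 => 1
  | n + 1 => FreeAlgebra.ι ℤ (HeisGen.B n)

/-- The defining relations of the integral Heisenberg ring. -/
inductive HeisRel : FreeAlgebra ℤ HeisGen → FreeAlgebra ℤ HeisGen → Prop
  | ab (n m : ℕ) :
      HeisRel (aF (n + 1) * bF (m + 1)) (bF (m + 1) * aF (n + 1) + bF m * aF n)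
  | aa (n m : ℕ) : HeisRel (aF (n + 1) * aF (m + 1)) (aF (m + 1) * aF (n + 1))
  | bb (n m : ℕ) : HeisRel (bF (n + 1) * bF (m + 1)) (bF (m + 1) * bF (n + 1))

/-- The integral Heisenberg ring `H_ℤ`. -/
noncomputable abbrev HeisZ : Type := RingQuot HeisRel

noncomputable def ha (n : ℕ) : HeisZ := RingQuot.mkRingHom HeisRel (aF n)

noncomputable def hb (n : ℕ) : HeisZ := RingQuot.mkRingHom HeisRel (bF n)

/-- Index for the normal-form monomials: a pair of weakly increasing lists of
positive integers `(m₁ ≤ ⋯ ≤ m_k, n₁ ≤ ⋯ ≤ n_r)`. -/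
def NormalPair (p : List ℕ × List ℕ) : Prop :=
  p.1.Pairwise (· ≤ ·) ∧ p.2.Pairwise (· ≤ ·) ∧
    (∀ x ∈ p.1, 1 ≤ x) ∧ (∀ x ∈ p.2, 1 ≤ x)

/-- The monomial `b_{m₁} ⋯ b_{m_k} · a_{n₁} ⋯ a_{n_r}`. -/
noncomputable def normalMonomial (p : List ℕ × List ℕ) : HeisZ :=
  (p.1.map hb).prod * (p.2.map ha).prod

lemma Commute.apply_comm {R M : Type*} [Semiring R] [AddCommMonoid M] [Module R M]
    {f g : Module.End R M} (h : Commute f g) (x : M) : f (g x) = g (f x) :=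
  LinearMap.congr_fun h.eq x

namespace HeisRep

/-- The basis vector `single (s, t) 1` stands for the monomial `b_s a_t`. -/
abbrev V : Type := Multiset ℕ × Multiset ℕ →₀ ℤ

noncomputable def consB (c : ℕ) : Module.End ℤ V :=
  Finsupp.lmapDomain ℤ ℤ (Prod.map (c ::ₘ ·) id)

/-- Indices are integers, with `b_m = a_n = 0` for negative indices as in the paper, so that the
defining relation holds for all `n m : ℤ` (`aOp_bOp`). -/
noncomputable def bOp : ℤ → Module.End ℤ V
  | .ofNat 0 => 1
  | .ofNat (m + 1) => consB (m + 1)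
  | .negSucc _ => 0

lemma bOp_zero : bOp 0 = 1 := rfl

lemma bOp_natCast_add_one (m : ℕ) : bOp (m + 1) = consB (m + 1) := rfl

lemma bOp_of_neg {m : ℤ} (hm : m < 0) : bOp m = 0 := by
  obtain ⟨k, rfl⟩ := Int.eq_negSucc_of_lt_zero hm
  rfl

noncomputable def aBase (t : Multiset ℕ) : ℤ → V
  | .ofNat 0 => Finsupp.single (0, t) 1
  | .ofNat (n + 1) => Finsupp.single (0, (n + 1) ::ₘ t) 1
  | .negSucc _ => 0

lemma aBase_zero (t : Multiset ℕ) : aBase t 0 = Finsupp.single (0, t) 1 := rfl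

lemma aBase_natCast_add_one (t : Multiset ℕ) (n : ℕ) :
    aBase t (n + 1) = Finsupp.single (0, (n + 1) ::ₘ t) 1 := rfl

lemma aBase_of_neg (t : Multiset ℕ) {n : ℤ} (hn : n < 0) : aBase t n = 0 := by
  obtain ⟨k, rfl⟩ := Int.eq_negSucc_of_lt_zero hn
  rfl

/-- If `g n` represents `a_n x`, then `step c g n` represents `a_n b_c x`, by the defining relation
`a_n b_c = b_c a_n + b_{c-1} a_{n-1}`. Folding it over `s` defines `a_n` on `b_s a_t`. -/
noncomputable def step (c : ℕ) (g : ℤ → V) (n : ℤ) : V :=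
  consB c (g n) + bOp (c - 1) (g (n - 1))

lemma consB_single (c : ℕ) (s t : Multiset ℕ) :
    consB c (Finsupp.single (s, t) 1) = Finsupp.single (c ::ₘ s, t) 1 := by
  simp [consB, Finsupp.mapDomain_single]

lemma commute_consB (c d : ℕ) : Commute (consB c) (consB d) := by
  ext ⟨s, t⟩
  simp [consB_single, Multiset.cons_swap]

lemma commute_bOp_consB (m : ℤ) (c : ℕ) : Commute (bOp m) (consB c) := by
  match m with
  | .ofNat 0 => exact Commute.one_left _
  | .ofNat (k + 1) => exact commute_consB _ _
  | .negSucc _ => exact Commute.zero_left _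

lemma commute_bOp (m k : ℤ) : Commute (bOp m) (bOp k) := by
  match k with
  | .ofNat 0 => exact Commute.one_right _
  | .ofNat (k + 1) => exact commute_bOp_consB _ _
  | .negSucc _ => exact Commute.zero_right _

instance : LeftCommutative step where
  left_comm c d g := by
    funext n
    simp only [step, map_add, (commute_consB c d).apply_comm, (commute_bOp_consB _ c).apply_comm,
      (commute_bOp_consB _ d).apply_comm, (commute_bOp (c - 1) (d - 1)).apply_comm]
    abel

noncomputable def aSeq (s t : Multiset ℕ) : ℤ → V :=
  s.foldr step (aBase t)

noncomputable def aOp (n : ℤ) : Module.End ℤ V :=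
  Finsupp.lift V ℤ _ fun p => aSeq p.1 p.2 n

lemma aOp_single (n : ℤ) (s t : Multiset ℕ) :
    aOp n (Finsupp.single (s, t) 1) = aSeq s t n := by
  simp [aOp]

lemma aSeq_zero_left (t : Multiset ℕ) : aSeq 0 t = aBase t := rfl

lemma aSeq_cons (c : ℕ) (s t : Multiset ℕ) : aSeq (c ::ₘ s) t = step c (aSeq s t) :=
  Multiset.foldr_cons _ _ _ _

lemma aSeq_of_neg (s t : Multiset ℕ) {n : ℤ} (hn : n < 0) : aSeq s t n = 0 := by
  induction s using Multiset.induction_on generalizing n with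
  | empty => exact aBase_of_neg t hn
  | cons c s ih => rw [aSeq_cons, step, ih hn, ih (by omega), map_zero, map_zero, add_zero]

lemma aSeq_apply_zero (s t : Multiset ℕ) : aSeq s t 0 = Finsupp.single (s, t) 1 := by
  induction s using Multiset.induction_on with
  | empty => rfl
  | cons c s ih =>
    rw [aSeq_cons, step, ih, consB_single, aSeq_of_neg _ _ (by norm_num), map_zero, add_zero]

lemma aOp_zero : aOp 0 = 1 := by
  ext ⟨s, t⟩
  simp [aOp_single, aSeq_apply_zero]

lemma aOp_consB (n : ℤ) (c : ℕ) (x : V) :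
    aOp n (consB c x) = consB c (aOp n x) + bOp (c - 1) (aOp (n - 1) x) := by
  suffices aOp n * consB c = consB c * aOp n + bOp (c - 1) * aOp (n - 1) from
    LinearMap.congr_fun this x
  ext ⟨s, t⟩
  simp [consB_single, aOp_single, aSeq_cons, step]

lemma aOp_bOp (n m : ℤ) (x : V) :
    aOp n (bOp m x) = bOp m (aOp n x) + bOp (m - 1) (aOp (n - 1) x) := by
  match m with
  | .ofNat 0 => simp [bOp_zero, bOp_of_neg]
  | .ofNat (k + 1) => simpa [bOp_natCast_add_one] using aOp_consB n (k + 1) x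
  | .negSucc _ => simp [bOp_of_neg, Int.negSucc_lt_zero]

lemma aOp_of_neg {n : ℤ} (hn : n < 0) : aOp n = 0 := by
  ext ⟨s, t⟩
  simp [aOp_single, aSeq_of_neg _ _ hn]

lemma aOp_aBase_comm (t : Multiset ℕ) (n m : ℤ) : aOp n (aBase t m) = aOp m (aBase t n) := by
  match n, m with
  | .negSucc _, _ | _, .negSucc _ => simp [aBase_of_neg, aOp_of_neg, Int.negSucc_lt_zero]
  | .ofNat 0, _ | _, .ofNat 0 => simp [aBase_zero, aOp_zero, aOp_single, aSeq_zero_left]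
  | .ofNat (j + 1), .ofNat (k + 1) =>
    simp [aBase_natCast_add_one, aOp_single, aSeq_zero_left, Multiset.cons_swap]

lemma aOp_aSeq_comm (s t : Multiset ℕ) (n m : ℤ) : aOp n (aSeq s t m) = aOp m (aSeq s t n) := by
  induction s using Multiset.induction_on generalizing n m with
  | empty => exact aOp_aBase_comm t n m
  | cons c s ih =>
    simp only [aSeq_cons, step, map_add, aOp_consB, aOp_bOp]
    rw [ih n m, ih (n - 1) m, ih n (m - 1), ih (n - 1) (m - 1)]
    abel

lemma commute_aOp (n m : ℤ) : Commute (aOp n) (aOp m) := by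
  ext ⟨s, t⟩ : 2
  simpa [aOp_single] using aOp_aSeq_comm s t n m

lemma aOp_single_zero_fst {n : ℕ} (hn : 1 ≤ n) (t : Multiset ℕ) :
    aOp n (Finsupp.single (0, t) 1) = Finsupp.single (0, n ::ₘ t) 1 := by
  obtain ⟨k, rfl⟩ := Nat.exists_eq_add_of_le' hn
  rw [aOp_single, aSeq_zero_left]
  exact aBase_natCast_add_one t k

noncomputable def genOp : HeisGen → Module.End ℤ V
  | .A n => aOp (n + 1)
  | .B n => bOp (n + 1)

noncomputable def freeRep : FreeAlgebra ℤ HeisGen →ₐ[ℤ] Module.End ℤ V :=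
  FreeAlgebra.lift ℤ genOp

lemma freeRep_aF (n : ℕ) : freeRep (aF n) = aOp n := by
  cases n with
  | zero => exact (map_one freeRep).trans aOp_zero.symm
  | succ n => exact FreeAlgebra.lift_ι_apply _ _

lemma freeRep_bF (n : ℕ) : freeRep (bF n) = bOp n := by
  cases n with
  | zero => exact map_one freeRep
  | succ n => exact FreeAlgebra.lift_ι_apply _ _

lemma freeRep_rel ⦃x y : FreeAlgebra ℤ HeisGen⦄ (h : HeisRel x y) : freeRep x = freeRep y := by
  cases h with
  | ab n m =>
    simp only [map_mul, map_add, freeRep_aF, freeRep_bF]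
    refine LinearMap.ext fun x => ?_
    simpa using aOp_bOp (n + 1) (m + 1) x
  | aa n m =>
    simp only [map_mul, freeRep_aF]
    exact commute_aOp _ _
  | bb n m =>
    simp only [map_mul, freeRep_bF]
    exact commute_bOp _ _

noncomputable def rep : HeisZ →ₐ[ℤ] Module.End ℤ V :=
  RingQuot.liftAlgHom ℤ ⟨freeRep, freeRep_rel⟩

lemma rep_mk (x : FreeAlgebra ℤ HeisGen) : rep (RingQuot.mkRingHom HeisRel x) = freeRep x := by
  rw [← RingQuot.mkAlgHom_coe ℤ HeisRel]
  exact RingQuot.liftAlgHom_mkAlgHom_apply ℤ _ _ _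

lemma rep_ha (n : ℕ) : rep (ha n) = aOp n := by rw [ha, rep_mk, freeRep_aF]

lemma rep_hb (n : ℕ) : rep (hb n) = bOp n := by rw [hb, rep_mk, freeRep_bF]

lemma rep_prod_ha_single {as : List ℕ} (has : ∀ n ∈ as, 1 ≤ n) (t : Multiset ℕ) :
    rep (as.map ha).prod (Finsupp.single (0, t) 1) = Finsupp.single (0, ↑as + t) 1 := by
  induction as with
  | nil => simp
  | cons n as ih =>
    rw [List.forall_mem_cons] at has
    rw [List.map_cons, List.prod_cons, map_mul, Module.End.mul_apply, ih has.2, rep_ha,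
      aOp_single_zero_fst has.1, ← Multiset.cons_add, Multiset.cons_coe]

lemma rep_prod_hb_single {bs : List ℕ} (hbs : ∀ m ∈ bs, 1 ≤ m) (s t : Multiset ℕ) :
    rep (bs.map hb).prod (Finsupp.single (s, t) 1) = Finsupp.single (↑bs + s, t) 1 := by
  induction bs with
  | nil => simp
  | cons m bs ih =>
    rw [List.forall_mem_cons] at hbs
    obtain ⟨k, rfl⟩ := Nat.exists_eq_add_of_le' hbs.1
    rw [List.map_cons, List.prod_cons, map_mul, Module.End.mul_apply, ih hbs.2, rep_hb,
      Nat.cast_add_one, bOp_natCast_add_one, consB_single, ← Multiset.cons_add, Multiset.cons_coe]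

lemma rep_normalMonomial_single_zero {p : List ℕ × List ℕ} (hp : NormalPair p) :
    rep (normalMonomial p) (Finsupp.single (0, 0) 1) = Finsupp.single (↑p.1, ↑p.2) 1 := by
  rw [normalMonomial, map_mul, Module.End.mul_apply, rep_prod_ha_single hp.2.2.2,
    rep_prod_hb_single hp.2.2.1, add_zero, add_zero]

end HeisRep

lemma NormalPair.eq_of_coe_eq {p q : List ℕ × List ℕ} (hp : NormalPair p) (hq : NormalPair q)
    (h₁ : (p.1 : Multiset ℕ) = q.1) (h₂ : (p.2 : Multiset ℕ) = q.2) : p = q :=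
  Prod.ext (List.Perm.eq_of_pairwise' hp.1 hq.1 (Multiset.coe_eq_coe.mp h₁))
    (List.Perm.eq_of_pairwise' hp.2.1 hq.2.1 (Multiset.coe_eq_coe.mp h₂))

lemma linearIndependent_normalMonomial :
    LinearIndependent ℤ fun p : {p : List ℕ × List ℕ // NormalPair p} => normalMonomial p.1 := by
  have hinj : Function.Injective fun p : {p : List ℕ × List ℕ // NormalPair p} =>
      ((p.1.1 : Multiset ℕ), (p.1.2 : Multiset ℕ)) := fun p q h =>
    Subtype.ext (p.2.eq_of_coe_eq q.2 (congrArg Prod.fst h) (congrArg Prod.snd h))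
  refine LinearIndependent.of_comp
    (LinearMap.applyₗ (Finsupp.single (0, 0) 1) ∘ₗ HeisRep.rep.toLinearMap) ?_
  have := (Finsupp.linearIndependent_single_one ℤ (Multiset ℕ × Multiset ℕ)).comp _ hinj
  convert this using 1
  · exact funext fun p => HeisRep.rep_normalMonomial_single_zero p.2
  -- instance search equips `V` with `AddCommGroup.toIntModule` rather than `Finsupp.module`;
  -- `ℤ`-module structures are unique
  · exact Subsingleton.elim _ _

lemma ha_zero : ha 0 = 1 := map_one _

lemma hb_zero : hb 0 = 1 := map_one _

lemma commute_ha (m n : ℕ) : Commute (ha m) (ha n) := by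
  cases m with
  | zero => exact ha_zero ▸ Commute.one_left _
  | succ m =>
    cases n with
    | zero => exact ha_zero ▸ Commute.one_right _
    | succ n =>
      show ha (m + 1) * ha (n + 1) = ha (n + 1) * ha (m + 1)
      rw [ha, ha, ← map_mul, ← map_mul, RingQuot.mkRingHom_rel (HeisRel.aa m n)]

lemma commute_hb (m n : ℕ) : Commute (hb m) (hb n) := by
  cases m with
  | zero => exact hb_zero ▸ Commute.one_left _
  | succ m =>
    cases n with
    | zero => exact hb_zero ▸ Commute.one_right _
    | succ n =>
      show hb (m + 1) * hb (n + 1) = hb (n + 1) * hb (m + 1)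
      rw [hb, hb, ← map_mul, ← map_mul, RingQuot.mkRingHom_rel (HeisRel.bb m n)]

lemma ha_mul_hb (n m : ℕ) :
    ha (n + 1) * hb (m + 1) = hb (m + 1) * ha (n + 1) + hb m * ha n := by
  simp only [ha, hb, ← map_mul, ← map_add]
  exact RingQuot.mkRingHom_rel (HeisRel.ab n m)

lemma List.Perm.prod_map_eq_of_commute {α M : Type*} [Monoid M] {f : α → M}
    (hf : ∀ a b, Commute (f a) (f b)) {l₁ l₂ : List α} (h : l₁.Perm l₂) :
    (l₁.map f).prod = (l₂.map f).prod :=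
  (h.map f).prod_eq' (List.pairwise_map.mpr (List.pairwise_of_forall fun a b => hf a b))

lemma NormalPair.orderedInsert_fst {m : ℕ} (hm : 1 ≤ m) {bs as : List ℕ}
    (h : NormalPair (bs, as)) : NormalPair (bs.orderedInsert (· ≤ ·) m, as) :=
  ⟨h.1.orderedInsert m bs, h.2.1, by simpa [List.mem_orderedInsert, hm] using h.2.2.1, h.2.2.2⟩

lemma NormalPair.orderedInsert_snd {n : ℕ} (hn : 1 ≤ n) {bs as : List ℕ}
    (h : NormalPair (bs, as)) : NormalPair (bs, as.orderedInsert (· ≤ ·) n) :=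
  ⟨h.1, h.2.1.orderedInsert n as, h.2.2.1, by simpa [List.mem_orderedInsert, hn] using h.2.2.2⟩

lemma NormalPair.of_cons_fst {m : ℕ} {bs as : List ℕ} (h : NormalPair (m :: bs, as)) :
    NormalPair (bs, as) :=
  ⟨h.1.of_cons, h.2.1, fun x hx => h.2.2.1 x (List.mem_cons_of_mem m hx), h.2.2.2⟩

noncomputable def normalSpan : Submodule ℤ HeisZ :=
  Submodule.span ℤ (Set.range fun p : {p : List ℕ × List ℕ // NormalPair p} => normalMonomial p.1)

lemma normalMonomial_mem_normalSpan {p : List ℕ × List ℕ} (hp : NormalPair p) :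
    normalMonomial p ∈ normalSpan :=
  Submodule.subset_span ⟨⟨p, hp⟩, rfl⟩

lemma mul_mem_normalSpan_of_forall {x : HeisZ}
    (hx : ∀ p, NormalPair p → x * normalMonomial p ∈ normalSpan) {y : HeisZ}
    (hy : y ∈ normalSpan) : x * y ∈ normalSpan := by
  have : normalSpan ≤ normalSpan.comap (LinearMap.mulLeft ℤ x) :=
    Submodule.span_le.mpr (by rintro _ ⟨⟨p, hp⟩, rfl⟩; exact hx p hp)
  exact this hy

lemma hb_mul_mem_normalSpan (m : ℕ) {y : HeisZ} (hy : y ∈ normalSpan) : hb m * y ∈ normalSpan := by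
  refine mul_mem_normalSpan_of_forall (fun ⟨bs, as⟩ hp => ?_) hy
  cases m with
  | zero => simpa [hb_zero] using normalMonomial_mem_normalSpan hp
  | succ m =>
    have hsort : hb (m + 1) * normalMonomial (bs, as) =
        normalMonomial (bs.orderedInsert (· ≤ ·) (m + 1), as) := by
      dsimp only [normalMonomial]
      rw [← mul_assoc,
        (List.perm_orderedInsert (· ≤ ·) (m + 1) bs).prod_map_eq_of_commute commute_hb,
        List.map_cons, List.prod_cons]
    rw [hsort]
    exact normalMonomial_mem_normalSpan (hp.orderedInsert_fst m.succ_pos)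

lemma ha_mul_mem_normalSpan (n : ℕ) {y : HeisZ} (hy : y ∈ normalSpan) : ha n * y ∈ normalSpan := by
  refine mul_mem_normalSpan_of_forall (fun ⟨bs, as⟩ hp => ?_) hy
  induction bs generalizing n with
  | nil =>
    cases n with
    | zero => simpa [ha_zero] using normalMonomial_mem_normalSpan hp
    | succ n =>
      have hsort : ha (n + 1) * normalMonomial ([], as) =
          normalMonomial ([], as.orderedInsert (· ≤ ·) (n + 1)) := by
        dsimp only [normalMonomial]
        rw [List.map_nil, List.prod_nil, one_mul, one_mul,
          (List.perm_orderedInsert (· ≤ ·) (n + 1) as).prod_map_eq_of_commute commute_ha,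
          List.map_cons, List.prod_cons]
      rw [hsort]
      exact normalMonomial_mem_normalSpan (hp.orderedInsert_snd n.succ_pos)
  | cons m bs ih =>
    obtain ⟨k, rfl⟩ := Nat.exists_eq_add_of_le' (hp.2.2.1 m List.mem_cons_self)
    cases n with
    | zero => simpa [ha_zero] using normalMonomial_mem_normalSpan hp
    | succ n =>
      have hsplit : normalMonomial ((k + 1) :: bs, as) = hb (k + 1) * normalMonomial (bs, as) := by
        dsimp only [normalMonomial]
        rw [List.map_cons, List.prod_cons, mul_assoc]
      rw [hsplit, ← mul_assoc, ha_mul_hb, add_mul, mul_assoc, mul_assoc]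
      exact add_mem (hb_mul_mem_normalSpan _ (ih _ hp.of_cons_fst))
        (hb_mul_mem_normalSpan _ (ih _ hp.of_cons_fst))

lemma mul_mem_normalSpan (x : HeisZ) {y : HeisZ} (hy : y ∈ normalSpan) : x * y ∈ normalSpan := by
  obtain ⟨w, rfl⟩ := RingQuot.mkRingHom_surjective HeisRel x
  induction w using FreeAlgebra.induction generalizing y with
  | grade0 r => simpa [← zsmul_eq_mul] using normalSpan.smul_mem r hy
  | grade1 g =>
    cases g with
    | A n => exact ha_mul_mem_normalSpan (n + 1) hy
    | B n => exact hb_mul_mem_normalSpan (n + 1) hy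
  | add a b iha ihb => simpa only [map_add, add_mul] using add_mem (iha hy) (ihb hy)
  | mul a b iha ihb => simpa only [map_mul, mul_assoc] using iha (ihb hy)

lemma one_mem_normalSpan : (1 : HeisZ) ∈ normalSpan := by
  simpa [normalMonomial] using
    normalMonomial_mem_normalSpan (p := ([], [])) ⟨.nil, .nil, by simp, by simp⟩

lemma normalSpan_eq_top : normalSpan = ⊤ :=
  Submodule.eq_top_iff'.mpr fun x => by simpa using mul_mem_normalSpan x one_mem_normalSpan

/-- `H_ℤ` is free as an abelian group with basis the normal-form
monomials `b_{m₁}⋯b_{m_k} a_{n₁}⋯a_{n_r}` with `1 ≤ m₁ ≤ ⋯ ≤ m_k`,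
`1 ≤ n₁ ≤ ⋯ ≤ n_r`. -/
theorem heisZ_free_with_monomial_basis :
    ∃ Bas : Module.Basis {p : List ℕ × List ℕ // NormalPair p} ℤ HeisZ,
      ∀ p : {p : List ℕ × List ℕ // NormalPair p}, Bas p = normalMonomial p.1 :=
  ⟨Module.Basis.mk linearIndependent_normalMonomial normalSpan_eq_top.ge,
    fun _ => Module.Basis.mk_apply _ _ _⟩
end

section
/- Let H ≤ G be finite groups with left coset representatives g_1, …, g_m, and let p_H : kG → kH be the projection killing G∖H. Then for every g ∈ G, Σ_{i=1}^m p_H(g g_i^{-1}) g_i = g and Σ_{i=1}^m g_i^{-1} p_H(g_i g) = g in kG. (These are the zig-zag/snake identities for the second adjunction between induction and restriction.) -/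
open MonoidAlgebra Classical

variable {k : Type} [CommRing k] {G : Type} [Group G] [Fintype G]

/-- The projection `p_H : kG → kG` (with image `kH ⊆ kG`) sending `g ↦ g` for
`g ∈ H` and `g ↦ 0` otherwise, extended `k`-linearly. -/
noncomputable def pHG (k : Type) [CommRing k] {G : Type} [Group G] (H : Subgroup G) :
    MonoidAlgebra k G →ₗ[k] MonoidAlgebra k G where
  toFun f := MonoidAlgebra.ofCoeff (f.coeff.filter (· ∈ H))
  map_add' f g := by
    simp only [MonoidAlgebra.coeff_add, Finsupp.filter_add]; rfl
  map_smul' c f := by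
    simp only [MonoidAlgebra.coeff_smul, Finsupp.filter_smul]; rfl

theorem Fintype.sum_ite_const_of_existsUnique {ι M : Type*} [Fintype ι] [AddCommMonoid M]
    {p : ι → Prop} [DecidablePred p] (h : ∃! i, p i) (a : M) :
    ∑ i, (if p i then a else 0) = a := by
  obtain ⟨i₀, hi₀, huniq⟩ := h
  rw [Fintype.sum_eq_single i₀ fun j hj => if_neg (mt (huniq j) hj), if_pos hi₀]

section

omit [Fintype G]

theorem pHG_of (H : Subgroup G) (x : G) :
    pHG k H (of k G x) = if x ∈ H then of k G x else 0 := by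
  by_cases hx : x ∈ H <;> simp [pHG, of_apply, hx]

variable {ι : Type*} [Fintype ι] (H : Subgroup G) (r : ι → G) (x : G)

theorem sum_pHG_of_mul_inv_mul_of (hx : ∃! i, x * (r i)⁻¹ ∈ H) :
    ∑ i, pHG k H (of k G (x * (r i)⁻¹)) * of k G (r i) = of k G x := by
  simp_rw [pHG_of, ite_mul, zero_mul, ← map_mul, inv_mul_cancel_right]
  exact Fintype.sum_ite_const_of_existsUnique hx _

theorem sum_of_inv_mul_pHG_of_mul (hx : ∃! i, r i * x ∈ H) :
    ∑ i, of k G (r i)⁻¹ * pHG k H (of k G (r i * x)) = of k G x := by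
  simp_rw [pHG_of, mul_ite, mul_zero, ← map_mul, inv_mul_cancel_left]
  exact Fintype.sum_ite_const_of_existsUnique hx _

end

/-- For coset representatives `G = ⨆ᵢ H gᵢ` and any `g ∈ G`,
`∑ᵢ p_H(g gᵢ⁻¹) gᵢ = g` and `∑ᵢ gᵢ⁻¹ p_H(gᵢ g) = g` in `kG`
(the zig-zag identities for the second adjunction). -/
theorem pH_zigzag (H : Subgroup G) (m : ℕ) (r : Fin m → G)
    (hr : ∀ g : G, ∃! i : Fin m, g * (r i)⁻¹ ∈ H) (g : G) :
    (∑ i : Fin m,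
        pHG k H (MonoidAlgebra.of k G (g * (r i)⁻¹)) * MonoidAlgebra.of k G (r i)) =
        MonoidAlgebra.of k G g ∧
      (∑ i : Fin m,
        MonoidAlgebra.of k G ((r i)⁻¹) * pHG k H (MonoidAlgebra.of k G (r i * g))) =
        MonoidAlgebra.of k G g := by
  have hr' : ∃! i, r i * g ∈ H := by
    simpa only [← H.inv_mem_iff (x := r _ * g), mul_inv_rev] using hr g⁻¹
  exact ⟨sum_pHG_of_mul_inv_mul_of H r g (hr g), sum_of_inv_mul_pHG_of_mul H r g hr'⟩
end

section
/- (Mackey decomposition for S_n ⊂ S_{n+1}) For the standard inclusion of symmetric group algebras k[S_n] ⊂ k[S_{n+1}] (S_n the stabilizer of n+1), there is an isomorphism of (k[S_n], k[S_n])-bimodules: k[S_{n+1}] ≅ (k[S_n] ⊗_{k[S_{n-1}]} k[S_n]) ⊕ k[S_n], given explicitly by: g ↦ g for g ∈ S_n (second summand) and g s_n h ↦ g ⊗ h for g, h ∈ S_n, where s_n = (n, n+1). -/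
/-!
`S_{n+1}` is the disjoint union of the double cosets `S_n` and `S_n s_n S_n`: a permutation either
fixes `n+1` or is `g s_n h` with `g, h ∈ S_n`, and `g s_n h = g' s_n h'` forces `g' = g c`,
`h = c h'` with `c ∈ S_{n-1}` (`c` fixes `n` since `g` and `g'` agree there, and such `c` commute
with `s_n`). So `σ ↦ (0, σ)` on `S_n` and `g s_n h ↦ (g ⊗ h, 0)` is a well-defined function on the
group basis of `k[S_{n+1}]`. Its values span the target, and `(x ⊗ y, z) ↦ x s_n y + z`, which kills
the balancing relations because `S_{n-1}` commutes with `s_n`, sends them back to the group basis;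
hence they form a basis, and the isomorphism matches the two bases.
-/

open TensorProduct MonoidAlgebra Equiv

/-- The equivalence between `Fin N` and the subtype of `Fin (N+1)` of elements
less than `N` (the complement of the last point). -/
def finSubEquiv (N : ℕ) : Fin N ≃ {i : Fin (N + 1) // (i : ℕ) < N} where
  toFun i := ⟨i.castSucc, by simpa using i.isLt⟩
  invFun j := ⟨(j : Fin (N + 1)), j.2⟩
  left_inv i := rfl
  right_inv j := by
    ext
    simp [Fin.castSucc]

/-- The standard inclusion `S_N ⊆ S_{N+1}` as the stabilizer of the last point,
as a monoid homomorphism. -/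
def permIncl (N : ℕ) : Perm (Fin N) →* Perm (Fin (N + 1)) :=
  Perm.extendDomainHom (finSubEquiv N)

variable {k : Type} [CommRing k]

/-- The submodule of `k[S_{N+1}] ⊗[k] k[S_{N+1}]` spanned by the tensor
relations over `k[S_N]`, so that quotienting yields
`k[S_{N+1}] ⊗_{k[S_N]} k[S_{N+1}]`. -/
noncomputable def symBalancedRel (k : Type) [CommRing k] (N : ℕ) :
    Submodule k
      (MonoidAlgebra k (Perm (Fin (N + 1))) ⊗[k] MonoidAlgebra k (Perm (Fin (N + 1)))) :=
  Submodule.span k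
    {z | ∃ (x y : MonoidAlgebra k (Perm (Fin (N + 1)))) (σ : Perm (Fin N)),
      z = (x * MonoidAlgebra.of k _ (permIncl N σ)) ⊗ₜ[k] y -
            x ⊗ₜ[k] (MonoidAlgebra.of k _ (permIncl N σ) * y)}

theorem Module.Basis.exists_linearEquiv_apply_eq {ι R M P : Type*} [Semiring R]
    [AddCommMonoid M] [Module R M] [AddCommMonoid P] [Module R P] (b : Module.Basis ι R M)
    {v : ι → P} (ψ : P →ₗ[R] M) (hψ : ∀ i, ψ (v i) = b i)
    (hv : ⊤ ≤ Submodule.span R (Set.range v)) :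
    ∃ e : M ≃ₗ[R] P, ∀ i, e (b i) = v i := by
  have hli : LinearIndependent R v :=
    .of_comp ψ (by simpa [Function.comp_def, hψ] using b.linearIndependent)
  exact ⟨b.equiv (.mk hli hv) (Equiv.refl ι), fun i => by simp⟩

theorem Module.Basis.range_le_span {ι R M P : Type*} [Semiring R]
    [AddCommMonoid M] [Module R M] [AddCommMonoid P] [Module R P] (b : Module.Basis ι R M)
    (φ : M →ₗ[R] P) {s : Set P} (h : ∀ i, φ (b i) ∈ s) :
    LinearMap.range φ ≤ Submodule.span R s := by
  rw [LinearMap.range_eq_map, ← b.span_eq, Submodule.map_span, Submodule.span_le]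
  rintro _ ⟨_, ⟨i, rfl⟩, rfl⟩
  exact Submodule.subset_span (h i)

section permIncl

variable {M : ℕ}

theorem permIncl_apply_castSucc (σ : Perm (Fin M)) (i : Fin M) :
    permIncl M σ i.castSucc = (σ i).castSucc :=
  Perm.extendDomain_apply_image σ (finSubEquiv M) i

theorem permIncl_apply_last (σ : Perm (Fin M)) : permIncl M σ (Fin.last M) = Fin.last M :=
  Perm.extendDomain_apply_not_subtype σ (finSubEquiv M) (by simp)

theorem permIncl_injective : Function.Injective (permIncl M) :=
  Perm.extendDomainHom_injective (finSubEquiv M)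

theorem mem_range_permIncl_iff {τ : Perm (Fin (M + 1))} :
    τ ∈ (permIncl M).range ↔ τ (Fin.last M) = Fin.last M := by
  refine ⟨?_, fun h => ?_⟩
  · rintro ⟨σ, rfl⟩
    exact permIncl_apply_last σ
  have hlt : ∀ i : Fin (M + 1), (i : ℕ) < M ↔ i ≠ Fin.last M := fun i => by
    rw [← Fin.lt_last_iff_ne_last, Fin.lt_def, Fin.val_last]
  refine ⟨(finSubEquiv M).symm.permCongr (τ.subtypePerm fun i => ?_), ?_⟩
  · rw [hlt, hlt, τ.injective.ne_iff' h]
  refine Equiv.ext fun i => ?_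
  by_cases hi : (i : ℕ) < M
  · exact (Perm.extendDomain_apply_subtype _ (finSubEquiv M) (b := i) hi).trans
      (by simp [finSubEquiv])
  · rw [not_not.mp (mt (hlt i).2 hi), permIncl_apply_last, h]

end permIncl

section lastSwap

variable {N : ℕ}

def lastSwap (N : ℕ) : Perm (Fin (N + 2)) :=
  swap (Fin.last N).castSucc (Fin.last (N + 1))

theorem commute_lastSwap_permIncl_permIncl (c : Perm (Fin N)) :
    Commute (lastSwap N) (permIncl (N + 1) (permIncl N c)) := by
  have hfix : permIncl (N + 1) (permIncl N c) (Fin.last N).castSucc = (Fin.last N).castSucc := by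
    rw [permIncl_apply_castSucc, permIncl_apply_last]
  rw [commute_iff_eq, lastSwap, mul_swap_eq_swap_mul, hfix, permIncl_apply_last]

theorem permIncl_mul_lastSwap_mul_permIncl_apply_last (g h : Perm (Fin (N + 1))) :
    (permIncl (N + 1) g * lastSwap N * permIncl (N + 1) h) (Fin.last (N + 1)) =
      (g (Fin.last N)).castSucc := by
  simp [lastSwap, permIncl_apply_last, permIncl_apply_castSucc]

theorem exists_permIncl_mul_lastSwap_mul_permIncl_eq {σ : Perm (Fin (N + 2))}
    (hσ : σ (Fin.last (N + 1)) ≠ Fin.last (N + 1)) :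
    ∃ p : Perm (Fin (N + 1)) × Perm (Fin (N + 1)),
      permIncl (N + 1) p.1 * lastSwap N * permIncl (N + 1) p.2 = σ := by
  set t := swap (σ (Fin.last (N + 1))) (Fin.last N).castSucc
  have ht : t (Fin.last (N + 1)) = Fin.last (N + 1) :=
    swap_apply_of_ne_of_ne hσ.symm (Fin.castSucc_lt_last _).ne'
  obtain ⟨g, hg⟩ := mem_range_permIncl_iff.2 ht
  obtain ⟨h, hh⟩ := mem_range_permIncl_iff.2 (show (lastSwap N * t * σ) (Fin.last (N + 1)) =
      Fin.last (N + 1) by simp [t, lastSwap])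
  refine ⟨(g, h), ?_⟩
  rw [hg, hh, mul_assoc, mul_assoc, lastSwap, swap_mul_self_mul, swap_mul_self_mul]

theorem exists_permIncl_of_permIncl_mul_lastSwap_mul_permIncl_eq
    {g h g' h' : Perm (Fin (N + 1))}
    (he : permIncl (N + 1) g * lastSwap N * permIncl (N + 1) h =
      permIncl (N + 1) g' * lastSwap N * permIncl (N + 1) h') :
    ∃ c : Perm (Fin N), g' = g * permIncl N c ∧ h = permIncl N c * h' := by
  have hfix : (g⁻¹ * g') (Fin.last N) = Fin.last N := by
    have hlast := congrArg (· (Fin.last (N + 1))) he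
    simp only [permIncl_mul_lastSwap_mul_permIncl_apply_last, Fin.castSucc_inj] at hlast
    simp [← hlast]
  obtain ⟨c, hc⟩ := mem_range_permIncl_iff.2 hfix
  have hg' : g' = g * permIncl N c := by rw [hc, mul_inv_cancel_left]
  refine ⟨c, hg', permIncl_injective (mul_left_cancel (a := permIncl (N + 1) g * lastSwap N) ?_)⟩
  rw [he, hg', map_mul, map_mul, mul_assoc _ _ (lastSwap N),
    ← (commute_lastSwap_permIncl_permIncl c).eq]
  simp only [mul_assoc]

end lastSwap

section mackey

variable {N : ℕ}

local notation "A" => MonoidAlgebra k (Perm (Fin (N + 1)))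
local notation "B" => MonoidAlgebra k (Perm (Fin (N + 2)))
local notation "ι" => MonoidAlgebra.mapDomainAlgHom k k (permIncl (N + 1))

variable (k N) in
noncomputable def swapSandwich : A ⊗[k] A →ₗ[k] B :=
  TensorProduct.lift <| (LinearMap.mul k B).compl₁₂
    (LinearMap.mulRight k (of k _ (lastSwap N)) ∘ₗ (ι).toLinearMap) (ι).toLinearMap

theorem mapDomainAlgHom_permIncl_of (g : Perm (Fin (N + 1))) :
    ι (of k _ g) = of k _ (permIncl (N + 1) g) := by
  simp [of_apply]

theorem swapSandwich_tmul (x y : A) :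
    swapSandwich k N (x ⊗ₜ y) = ι x * of k _ (lastSwap N) * ι y :=
  rfl

theorem symBalancedRel_le_ker_swapSandwich :
    symBalancedRel k N ≤ LinearMap.ker (swapSandwich k N) := by
  rw [symBalancedRel, Submodule.span_le]
  rintro _ ⟨x, y, c, rfl⟩
  have hc := (commute_lastSwap_permIncl_permIncl c).map (of k (Perm (Fin (N + 2))))
  simp only [SetLike.mem_coe, LinearMap.mem_ker, map_sub, swapSandwich_tmul, map_mul,
    mapDomainAlgHom_permIncl_of, sub_eq_zero]
  rw [mul_assoc (ι x), ← hc.eq]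
  simp only [mul_assoc]

variable (k N) in
noncomputable def mackeyInv : ((A ⊗[k] A) ⧸ symBalancedRel k N) × A →ₗ[k] B :=
  LinearMap.coprod ((symBalancedRel k N).liftQ _ symBalancedRel_le_ker_swapSandwich)
    (ι).toLinearMap

-- Which decomposition `σ = g s h` is chosen does not matter modulo the balancing relations.
variable (k N) in
noncomputable def mackeyFun (σ : Perm (Fin (N + 2))) :
    ((A ⊗[k] A) ⧸ symBalancedRel k N) × A :=
  if hσ : σ (Fin.last (N + 1)) = Fin.last (N + 1) then
    (0, of k _ (mem_range_permIncl_iff.2 hσ).choose)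
  else
    let p := (exists_permIncl_mul_lastSwap_mul_permIncl_eq hσ).choose
    ((symBalancedRel k N).mkQ (of k _ p.1 ⊗ₜ of k _ p.2), 0)

theorem mk_of_mul_permIncl_tmul (g h : Perm (Fin (N + 1))) (c : Perm (Fin N)) :
    (symBalancedRel k N).mkQ (of k _ (g * permIncl N c) ⊗ₜ of k _ h) =
      (symBalancedRel k N).mkQ (of k _ g ⊗ₜ of k _ (permIncl N c * h)) :=
  (Submodule.Quotient.eq _).2 <| Submodule.subset_span ⟨of k _ g, of k _ h, c, by simp⟩

theorem mackeyFun_permIncl (g : Perm (Fin (N + 1))) :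
    mackeyFun k N (permIncl (N + 1) g) = (0, of k _ g) := by
  have hg := permIncl_apply_last g
  rw [mackeyFun, dif_pos hg, permIncl_injective (mem_range_permIncl_iff.2 hg).choose_spec]

theorem mackeyFun_permIncl_mul_lastSwap_mul_permIncl (g h : Perm (Fin (N + 1))) :
    mackeyFun k N (permIncl (N + 1) g * lastSwap N * permIncl (N + 1) h) =
      ((symBalancedRel k N).mkQ (of k _ g ⊗ₜ of k _ h), 0) := by
  have hσ : (permIncl (N + 1) g * lastSwap N * permIncl (N + 1) h) (Fin.last (N + 1)) ≠
      Fin.last (N + 1) := by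
    rw [permIncl_mul_lastSwap_mul_permIncl_apply_last]
    exact (Fin.castSucc_lt_last _).ne
  obtain ⟨c, hg, hh⟩ := exists_permIncl_of_permIncl_mul_lastSwap_mul_permIncl_eq
    (exists_permIncl_mul_lastSwap_mul_permIncl_eq hσ).choose_spec
  rw [mackeyFun, dif_neg hσ]
  generalize (exists_permIncl_mul_lastSwap_mul_permIncl_eq hσ).choose = p at hg hh ⊢
  rw [hg, mk_of_mul_permIncl_tmul, ← hh]

theorem mackeyInv_mackeyFun (σ : Perm (Fin (N + 2))) :
    mackeyInv k N (mackeyFun k N σ) = of k _ σ := by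
  by_cases hσ : σ (Fin.last (N + 1)) = Fin.last (N + 1)
  · obtain ⟨g, rfl⟩ := mem_range_permIncl_iff.2 hσ
    simp [mackeyFun_permIncl, mackeyInv]
  · obtain ⟨⟨g, h⟩, rfl⟩ := exists_permIncl_mul_lastSwap_mul_permIncl_eq hσ
    simp [mackeyFun_permIncl_mul_lastSwap_mul_permIncl, mackeyInv, swapSandwich_tmul]

theorem top_le_span_range_mackeyFun : ⊤ ≤ Submodule.span k (Set.range (mackeyFun k N)) := by
  rw [← LinearMap.sup_range_inl_inr, ← LinearMap.range_comp_of_range_eq_top _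
    (Submodule.range_mkQ (symBalancedRel k N))]
  refine sup_le ((basis _ k).tensorProduct (basis _ k) |>.range_le_span _ fun p => ?_)
    ((basis _ k).range_le_span _ fun g => ?_)
  · exact ⟨_, by simpa [of_apply, Module.Basis.tensorProduct_apply'] using
      mackeyFun_permIncl_mul_lastSwap_mul_permIncl (k := k) p.1 p.2⟩
  · exact ⟨_, by simpa [of_apply] using mackeyFun_permIncl (k := k) g⟩

end mackey

/-- **Mackey decomposition for `S_n ⊂ S_{n+1}`.**  For the
standard inclusion `k[S_{n+1}] ⊃ k[S_n]` (with `n = N+1`, `S_n` the stabilizer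
of the last point `n+1`), there is an isomorphism of `(k[S_n], k[S_n])`-bimodules
`k[S_{n+1}] ≅ (k[S_n] ⊗_{k[S_{n-1}]} k[S_n]) ⊕ k[S_n]`, given by `g ↦ g` for
`g ∈ S_n` (second summand) and `g sₙ h ↦ g ⊗ h` for `g, h ∈ S_n`, where
`sₙ = (n, n+1)` is the transposition of the last two points. -/
theorem mackey_symmetric_group (N : ℕ) :
    ∃ φ : MonoidAlgebra k (Perm (Fin (N + 2))) ≃ₗ[k]
        ((MonoidAlgebra k (Perm (Fin (N + 1))) ⊗[k]
            MonoidAlgebra k (Perm (Fin (N + 1)))) ⧸ symBalancedRel k N) ×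
          MonoidAlgebra k (Perm (Fin (N + 1))),
      (∀ g : Perm (Fin (N + 1)),
          φ (MonoidAlgebra.of k _ (permIncl (N + 1) g)) =
            (0, MonoidAlgebra.of k _ g)) ∧
        ∀ g h : Perm (Fin (N + 1)),
          φ (MonoidAlgebra.of k _
              (permIncl (N + 1) g *
                Equiv.swap (⟨N, by omega⟩ : Fin (N + 2)) ⟨N + 1, by omega⟩ *
                permIncl (N + 1) h)) =
            ((symBalancedRel k N).mkQ
                (MonoidAlgebra.of k _ g ⊗ₜ[k] MonoidAlgebra.of k _ h), 0) := by
  obtain ⟨e, he⟩ := (basis (Perm (Fin (N + 2))) k).exists_linearEquiv_apply_eq (mackeyInv k N)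
    (fun σ => by rw [mackeyInv_mackeyFun, basis_apply, of_apply]) top_le_span_range_mackeyFun
  refine ⟨e, fun g => ?_, fun g h => ?_⟩
  · rw [of_apply, ← basis_apply, he, mackeyFun_permIncl]
  · rw [of_apply, ← basis_apply, he]
    exact mackeyFun_permIncl_mul_lastSwap_mul_permIncl g h
end

section
/- For n ≥ 1, the element c_{1,n} := Σ_{i=1}^n (i, i+1, …, n)·J_{n-1}·(n, n-1, …, i), where J_{n-1} = Σ_{j=1}^{n-1} (j, n), equals twice the sum of all transpositions in S_n: c_{1,n} = 2 Σ_{1 ≤ i < j ≤ n} (i, j). In particular, c_{1,n} lies in the center of k[S_n]. Also c_{0,n} := Σ_{i=1}^n (i,…,n)(n,…,i) = n·1. -/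
open Equiv MonoidAlgebra

/-- The adjacent transposition swapping the 0-indexed points `j` and `j+1` of
`Fin (N+1)` (and `1` if out of range). -/
noncomputable def adjT (N j : ℕ) : Perm (Fin (N + 1)) :=
  if h : j + 1 < N + 1 then Equiv.swap ⟨j, by omega⟩ ⟨j + 1, h⟩ else 1

/-- The cycle `(i, i+1, …, n)` of `S_n` in 1-indexed notation (`n = N+1`,
`i = j+1`): the product `t_j t_{j+1} ⋯ t_{N-1}` of adjacent transpositions,
which sends `j ↦ j+1 ↦ ⋯ ↦ N ↦ j` (0-indexed). -/
noncomputable def cyc (N j : ℕ) : Perm (Fin (N + 1)) :=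
  ((List.range (N - j)).map fun m => adjT N (j + m)).prod

/-- The Jucys–Murphy element `J_{n-1} = ∑_{j=1}^{n-1} (j, n)` of `k[S_n]`
(`n = N+1`). -/
noncomputable def jmLast (k : Type) [CommRing k] (N : ℕ) :
    MonoidAlgebra k (Perm (Fin (N + 1))) :=
  ∑ j : Fin N, MonoidAlgebra.of k (Perm (Fin (N + 1)))
    (Equiv.swap j.castSucc (Fin.last N))

/-- The element `c_{k,n} = ∑_{i=1}^{n} (i,…,n) · J_{n-1}ᵏ · (n,…,i)` of
`k[S_n]` (`n = N+1`), the sum over the coset representatives `(i,…,n)` of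
`S_{n-1} ⊂ S_n` of the conjugates of the `k`-th power of `J_{n-1}`. -/
noncomputable def cElt (k : Type) [CommRing k] (N kk : ℕ) :
    MonoidAlgebra k (Perm (Fin (N + 1))) :=
  ∑ j : Fin (N + 1),
    MonoidAlgebra.of k (Perm (Fin (N + 1))) (cyc N j) * jmLast k N ^ kk *
      MonoidAlgebra.of k (Perm (Fin (N + 1))) (cyc N j)⁻¹

/-! Conjugation by `σ` carries `J_{n-1} = ∑_{b ≠ n} (b, n)` to `∑_{b ≠ σ n} (b, σ n)`, and the cycle
`(i, …, n)` sends `n` to `i`. Hence `c_{1,n} = ∑_a ∑_{b ≠ a} (b, a)`, which lists every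
transposition twice and is fixed by conjugation by any permutation, so it is central. -/

open Finset

theorem MonoidAlgebra.commute_of_forall_commute_of {k G : Type*} [CommSemiring k] [Monoid G]
    {x : MonoidAlgebra k G} (h : ∀ g, Commute x (of k G g)) (y : MonoidAlgebra k G) :
    Commute x y := by
  induction y using MonoidAlgebra.induction_on with
  | of g => exact h g
  | add y z hy hz => exact hy.add_right hz
  | smul r y hy => exact hy.smul_right r

theorem sum_sum_erase_eq_two_smul {α M : Type*} [Fintype α] [DecidableEq α] [LinearOrder α]
    [AddCommMonoid M] (f : α → α → M) (hf : ∀ a b, f a b = f b a) :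
    ∑ a, ∑ b ∈ univ.erase a, f b a = 2 • ∑ a, ∑ b ∈ univ.filter (· < a), f b a := by
  have split : ∀ a, ∑ b ∈ univ.erase a, f b a =
      ∑ b ∈ univ.filter (· < a), f b a + ∑ b ∈ univ.filter (a < ·), f b a := by
    intro a
    rw [← filter_ne', sum_filter, sum_filter, sum_filter, ← sum_add_distrib]
    refine sum_congr rfl fun b _ => ?_
    rcases lt_trichotomy b a with h | rfl | h
    · simp [h, h.ne, h.not_gt]
    · simp
    · simp [h, h.ne', h.not_gt]
  have flip : ∑ a, ∑ b ∈ univ.filter (a < ·), f b a = ∑ a, ∑ b ∈ univ.filter (· < a), f b a := by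
    simp only [sum_filter]
    rw [sum_comm]
    exact sum_congr rfl fun a _ => sum_congr rfl fun b _ => by rw [hf]
  rw [sum_congr rfl fun a _ => split a, sum_add_distrib, flip, two_smul]

section StarSum

variable (k : Type*) [CommSemiring k] {α : Type*} [DecidableEq α] [Fintype α]

noncomputable def starSum (a : α) : MonoidAlgebra k (Perm α) :=
  ∑ b ∈ univ.erase a, of k (Perm α) (swap b a)

variable {k}

theorem of_mul_starSum (σ : Perm α) (a : α) :
    of k (Perm α) σ * starSum k a = starSum k (σ a) * of k (Perm α) σ := by
  simp only [starSum, mul_sum, sum_mul, ← map_mul, mul_swap_eq_swap_mul]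
  exact sum_equiv σ (by simp) fun _ _ => rfl

theorem sum_starSum_commute_of (σ : Perm α) :
    Commute (∑ a, starSum k a) (of k (Perm α) σ) := by
  simp only [Commute, SemiconjBy, mul_sum, sum_mul, of_mul_starSum]
  exact (Equiv.sum_comp σ _).symm

theorem sum_starSum_eq_two_smul [LinearOrder α] :
    ∑ a, starSum k a = 2 • ∑ a, ∑ b ∈ univ.filter (· < a), of k (Perm α) (swap b a) :=
  sum_sum_erase_eq_two_smul _ fun a b => by rw [swap_comm]

end StarSum

theorem cyc_castSucc (N : ℕ) (i : Fin N) : cyc N i.castSucc = adjT N i * cyc N i.succ := by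
  have hlen : N - i = N - (i + 1) + 1 := by omega
  simp only [cyc, Fin.val_castSucc, Fin.val_succ, hlen, List.range_succ_eq_map,
    List.map_cons, List.prod_cons, List.map_map, add_zero, Function.comp_def, add_assoc,
    add_comm 1]

theorem cyc_apply_last (N : ℕ) (j : Fin (N + 1)) : cyc N j (Fin.last N) = j := by
  induction j using Fin.reverseInduction with
  | last => simp [cyc]
  | cast i ih =>
    rw [cyc_castSucc, Perm.mul_apply, ih, adjT, dif_pos (by omega)]
    exact swap_apply_right _ _

theorem jmLast_eq_starSum (k : Type) [CommRing k] (N : ℕ) :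
    jmLast k N = starSum k (Fin.last N) := by
  rw [jmLast, starSum, ← compl_singleton, ← Fin.image_castSucc,
    sum_image fun _ _ _ _ h => Fin.castSucc_injective N h]

theorem cElt_one_eq_sum_starSum (k : Type) [CommRing k] (N : ℕ) :
    cElt k N 1 = ∑ j, starSum k j := by
  refine sum_congr rfl fun j _ => ?_
  rw [pow_one, jmLast_eq_starSum, of_mul_starSum, cyc_apply_last, mul_assoc, ← map_mul,
    mul_inv_cancel, map_one, mul_one]

theorem cElt_zero (k : Type) [CommRing k] (N : ℕ) :
    cElt k N 0 = (N + 1) • (1 : MonoidAlgebra k (Perm (Fin (N + 1)))) := by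
  simp only [cElt, pow_zero, mul_one, ← map_mul, mul_inv_cancel, map_one]
  rw [sum_const, card_univ, Fintype.card_fin]

/-- For `n = N+1 ≥ 1`:
`c_{1,n} = ∑_{i=1}^{n} (i,…,n) · J_{n-1} · (n,…,i)` equals twice the sum of all
transpositions of `S_n`; in particular it is central in `k[S_n]`.  Moreover
`c_{0,n} = ∑_{i=1}^{n} (i,…,n)(n,…,i) = n · 1`. -/
theorem cElt_one_and_zero (k : Type) [CommRing k] (N : ℕ) :
    cElt k N 1 =
        2 • ∑ q : Fin (N + 1), ∑ p ∈ Finset.univ.filter (· < q),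
          MonoidAlgebra.of k (Perm (Fin (N + 1))) (Equiv.swap p q) ∧
      (∀ x : MonoidAlgebra k (Perm (Fin (N + 1))),
        cElt k N 1 * x = x * cElt k N 1) ∧
      cElt k N 0 = (N + 1) • (1 : MonoidAlgebra k (Perm (Fin (N + 1)))) := by
  rw [cElt_one_eq_sum_starSum]
  exact ⟨sum_starSum_eq_two_smul,
    fun x => (commute_of_forall_commute_of sum_starSum_commute_of x).eq, cElt_zero k N⟩
end

section
/- Let λ range over partitions and suppose, in the Heisenberg algebra H_ℤ, y = Σ_{λ,μ} y_{λ,μ} b_μ a_λ is a nonzero element (finite sum, y_{λ,μ} ∈ ℤ), where {b_μ a_λ} is the standard basis. If k is minimal with y_{λ,μ} ≠ 0 for some λ with |λ| = k, then there exist ν with |ν| = k and μ with y_{ν,μ} ≠ 0, and the element Σ_μ y_{ν,μ} s_{μ*} of the ring of symmetric functions is nonzero (where s denotes Schur functions and μ* the conjugate partition). Consequently the map γ : H_ℤ → K_0(H) defined via the action on ⊕_n K_0(k[S_n]) is injective. -/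
/-- A partition, encoded as a weakly increasing list of positive integers. -/
def IsPartitionList (l : List ℕ) : Prop :=
  l.Pairwise (· ≤ ·) ∧ ∀ x ∈ l, 1 ≤ x

/-- The conjugate (dual) partition `μ*` of a partition (encoded as a list):
the `i`-th column length is the number of parts `> i`; the result is again
recorded as a weakly increasing list. -/
def conjPart (l : List ℕ) : List ℕ :=
  ((List.range (l.foldr max 0)).map fun i => l.countP fun x => decide (i < x)).reverse
/-!
Take `p` in the support of `y` with `|p.1| = κ` and `ν = p.1`. The sum in question is the
`ℤ`-linear combination `∑_μ y (ν, μ) • s (μ*)` over partitions `μ`. Conjugation maps partitions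
injectively to partitions, so `μ ↦ s (μ*)` is still linearly independent on partitions, and the
combination vanishes only if every `y (ν, μ)` does, which fails at `μ = p.2`.
-/

theorem Finsupp.sum_ite_fst_eq_sum_curry {α β M N : Type*} [DecidableEq α] [AddCommMonoid M]
    [AddCommMonoid N] (f : α × β →₀ M) (a : α) (g : β → M → N) :
    (f.sum fun p c => if p.1 = a then g p.2 c else 0) = (f.curry a).sum g := by
  rw [← Finsupp.sum_curry_index f fun a' b c => if a' = a then g b c else 0]
  simp only [Finsupp.sum, Finset.sum_ite_irrel, Finset.sum_const_zero]
  rw [Finset.sum_ite_eq']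
  split_ifs with ha
  · rfl
  · rw [Finsupp.notMem_support_iff.1 ha]; simp

theorem reverse_conjPart_getD (l : List ℕ) (i : ℕ) :
    (conjPart l).reverse.getD i 0 = l.countP fun x => decide (i < x) := by
  rw [conjPart, List.reverse_reverse, List.getD_eq_getElem?_getD, List.getElem?_map]
  by_cases hi : i < l.foldr max 0
  · rw [List.getElem?_range hi]; rfl
  · rw [List.getElem?_eq_none (by simpa using hi)]
    refine (List.countP_eq_zero.2 fun x hx => ?_).symm
    have : x ≤ l.foldr max 0 := List.le_max_of_le hx le_rfl
    simp only [decide_eq_true_eq]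
    omega

theorem isPartitionList_conjPart (l : List ℕ) : IsPartitionList (conjPart l) := by
  constructor
  · rw [conjPart, List.pairwise_reverse, List.pairwise_map]
    refine List.pairwise_lt_range.imp fun hij => List.countP_mono_left fun x _ h => ?_
    simp only [decide_eq_true_eq] at *
    omega
  · intro x hx
    simp only [conjPart, List.mem_reverse, List.mem_map, List.mem_range] at hx
    obtain ⟨i, hi, rfl⟩ := hx
    by_contra! h
    have : l.foldr max 0 ≤ i := List.max_le_of_forall_le l i fun x hx => by
      simpa using List.countP_eq_zero.1 (Nat.lt_one_iff.1 h) x hx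
    omega

theorem countP_lt_eq_count_succ_add (l : List ℕ) (n : ℕ) :
    (l.countP fun x => decide (n < x)) =
      l.count (n + 1) + l.countP fun x => decide (n + 1 < x) := by
  induction l with
  | nil => rfl
  | cons a t ih =>
    simp only [List.countP_cons, List.count_cons, ih, beq_iff_eq, decide_eq_true_eq]
    split_ifs <;> omega

/-- The `i`-th part of `μ*` counts the parts of `μ` exceeding `i`; these counts determine the
multiplicity of every part, and a sorted list is determined by its multiplicities. -/
theorem conjPart_injOn : Set.InjOn conjPart {l | IsPartitionList l} := by
  intro l hl l' hl' h
  have hcountP (i : ℕ) :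
      (l.countP fun x => decide (i < x)) = l'.countP fun x => decide (i < x) := by
    rw [← reverse_conjPart_getD, h, reverse_conjPart_getD]
  have hcount0 {l : List ℕ} (hl : IsPartitionList l) : l.count 0 = 0 :=
    List.count_eq_zero.2 fun h0 => by simpa using hl.2 0 h0
  refine (List.perm_iff_count.2 fun n => ?_).eq_of_pairwise' hl.1 hl'.1
  cases n with
  | zero => rw [hcount0 hl, hcount0 hl']
  | succ n =>
    have := countP_lt_eq_count_succ_add l n
    have := countP_lt_eq_count_succ_add l' n
    have := hcountP n
    have := hcountP (n + 1)
    omega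

theorem LinearIndependent.linearIndepOn_comp_conjPart {R M : Type*} [Semiring R]
    [AddCommMonoid M] [Module R M] {s : List ℕ → M}
    (hs : LinearIndependent R fun l : {l : List ℕ // IsPartitionList l} => s l.1) :
    LinearIndepOn R (s ∘ conjPart) {l | IsPartitionList l} :=
  hs.comp (ι' := {l : List ℕ | IsPartitionList l})
    (fun l => ⟨conjPart l.1, isPartitionList_conjPart l.1⟩)
    fun l l' h => Subtype.ext (conjPart_injOn l.2 l'.2 (congrArg Subtype.val h))

theorem heisZ_gamma_injective_key_general
    (Sym : Type) [CommRing Sym] (s : List ℕ → Sym)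
    (hs : LinearIndependent ℤ fun l : {l : List ℕ // IsPartitionList l} => s l.1)
    (y : (List ℕ × List ℕ) →₀ ℤ)
    (hsupp : ∀ p ∈ y.support, IsPartitionList p.1 ∧ IsPartitionList p.2)
    (κ : ℕ)
    (hκ : IsLeast {k' : ℕ | ∃ p ∈ y.support, p.1.sum = k'} κ) :
    ∃ ν : List ℕ, IsPartitionList ν ∧ ν.sum = κ ∧
      (∃ μ : List ℕ, y (ν, μ) ≠ 0) ∧
      (y.sum fun p c => if p.1 = ν then c • s (conjPart p.2) else 0) ≠ 0 := by
  obtain ⟨⟨p, hp, rfl⟩, -⟩ := hκ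
  have hyp : y (p.1, p.2) ≠ 0 := Finsupp.mem_support_iff.1 hp
  have hc : y.curry p.1 ∈ Finsupp.supported ℤ ℤ {l | IsPartitionList l} :=
    fun μ hμ => (hsupp (p.1, μ) (by simpa using hμ)).2
  have hc0 : y.curry p.1 ≠ 0 := fun h => hyp (by simpa using DFunLike.congr_fun h p.2)
  refine ⟨p.1, (hsupp p hp).1, rfl, ⟨p.2, hyp⟩, fun h => hc0 ?_⟩
  rw [Finsupp.sum_ite_fst_eq_sum_curry y p.1 fun μ c => c • s (conjPart μ)] at h
  exact linearIndepOn_iff.1 hs.linearIndepOn_comp_conjPart _ hc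
    (by rwa [Finsupp.linearCombination_apply])

/-- Suppose `y = ∑_{λ,μ} y_{λ,μ} b_μ a_λ` is a nonzero element
of the integral Heisenberg ring `H_ℤ`, written in the standard basis
`{b_μ a_λ}` indexed by pairs of partitions.  Let `κ` be minimal such that
`y_{λ,μ} ≠ 0` for some `λ` with `|λ| = κ`.  Then there are `ν` with `|ν| = κ`
and `μ` with `y_{ν,μ} ≠ 0`, and — for any family `s` of "Schur functions" in a
commutative ring which is linearly independent over `ℤ` when restricted to
partitions — the element `∑_μ y_{ν,μ} s_{μ*}` is nonzero.  (This is the key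
step showing that the map `γ : H_ℤ → K₀(𝒽)`, defined via the action on
`⊕ₙ K₀(k[Sₙ])`, is injective.) -/
theorem heisZ_gamma_injective_key
    (Sym : Type) [CommRing Sym] (s : List ℕ → Sym)
    (hs : LinearIndependent ℤ fun l : {l : List ℕ // IsPartitionList l} => s l.1)
    (y : (List ℕ × List ℕ) →₀ ℤ)
    (hsupp : ∀ p ∈ y.support, IsPartitionList p.1 ∧ IsPartitionList p.2)
    (hy : (y.sum fun p c => c • normalMonomial (p.2, p.1)) ≠ (0 : HeisZ))
    (κ : ℕ)
    (hκ : IsLeast {k' : ℕ | ∃ p ∈ y.support, p.1.sum = k'} κ) :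
    ∃ ν : List ℕ, IsPartitionList ν ∧ ν.sum = κ ∧
      (∃ μ : List ℕ, y (ν, μ) ≠ 0) ∧
      (y.sum fun p c => if p.1 = ν then c • s (conjPart p.2) else 0) ≠ 0 :=
  heisZ_gamma_injective_key_general Sym s hs y hsupp κ hκ
end
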